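/- Let V ⊆ ℝ³ be the set of 13 vectors {(i, j, 1) : i, j ∈ {−1, 0, 1}} ∪ {(1, 0, 0), (0, 1, 0), (1, 1, 0), (1, −1, 0)}, let P be the set of 13 points of the real projective plane spanned by the vectors of V, and let L be the set of 13 lines of the real projective plane whose normal vectors are the vectors of V (i.e., for v ∈ V the line {w ∈ ℝ³ : ⟨v, w⟩ = 0}). Then |P| = |L| = 13, every point of P is incident to 3 or 4 lines of L, every line of L is incident to 3 or 4 points of P, and the number of incidences of (P, L) is 48; that is, (P, L) is a geometric (13_{3|4}) configuration with 48 incidences. -/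
import Mathlib


/- Model of the real projective plane: a point is a 1-dimensional linear subspace
of ℝ³ and a line is a 2-dimensional linear subspace of ℝ³; a point p is incident
to a line ℓ when p ≤ ℓ. -/

open scoped Classical

/-- The degree of a point `p` with respect to a finite set `L` of lines:
the number of lines of `L` incident to `p`. -/
noncomputable def pointDeg (L : Finset (Submodule ℝ (Fin 3 → ℝ)))
    (p : Submodule ℝ (Fin 3 → ℝ)) : ℕ :=
  (L.filter fun l => p ≤ l).card

/-- The degree of a line `l` with respect to a finite set `P` of points:
the number of points of `P` incident to `l`. -/
noncomputable def lineDeg (P : Finset (Submodule ℝ (Fin 3 → ℝ)))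
    (l : Submodule ℝ (Fin 3 → ℝ)) : ℕ :=
  (P.filter fun p => p ≤ l).card

/-- The number of incidences of `(P, L)`: the number of pairs `(p, ℓ) ∈ P × L`
with `p` incident to `ℓ`. -/
noncomputable def incCount (P L : Finset (Submodule ℝ (Fin 3 → ℝ))) : ℕ :=
  ((P ×ˢ L).filter fun pl => pl.1 ≤ pl.2).card

/-- A point of the real projective plane: a 1-dimensional linear subspace of ℝ³. -/
def IsProjPoint (p : Submodule ℝ (Fin 3 → ℝ)) : Prop := Module.finrank ℝ p = 1

/-- A line of the real projective plane: a 2-dimensional linear subspace of ℝ³. -/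
def IsProjLine (l : Submodule ℝ (Fin 3 → ℝ)) : Prop := Module.finrank ℝ l = 2

/-- The 13 vectors {(i, j, 1) : i, j ∈ {−1, 0, 1}} ∪ {(1,0,0), (0,1,0), (1,1,0), (1,−1,0)}. -/
def vecs : Fin 13 → (Fin 3 → ℝ) :=
  ![![-1, -1, 1], ![-1, 0, 1], ![-1, 1, 1],
    ![0, -1, 1], ![0, 0, 1], ![0, 1, 1],
    ![1, -1, 1], ![1, 0, 1], ![1, 1, 1],
    ![1, 0, 0], ![0, 1, 0], ![1, 1, 0], ![1, -1, 0]]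

/-- The line of the real projective plane with normal vector `v`,
i.e. `{w ∈ ℝ³ : ⟨v, w⟩ = 0}` as a linear subspace of ℝ³. -/
noncomputable def lineOf (v : Fin 3 → ℝ) : Submodule ℝ (Fin 3 → ℝ) :=
  LinearMap.ker (LinearMap.lsum ℝ (fun _ : Fin 3 => ℝ) ℝ
    (fun i => LinearMap.toSpanSingleton ℝ ℝ (v i)))


def vecsZ : Fin 13 → (Fin 3 → ℤ) :=
  ![![-1, -1, 1], ![-1, 0, 1], ![-1, 1, 1],
    ![0, -1, 1], ![0, 0, 1], ![0, 1, 1],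
    ![1, -1, 1], ![1, 0, 1], ![1, 1, 1],
    ![1, 0, 0], ![0, 1, 0], ![1, 1, 0], ![1, -1, 0]]

def M : Fin 13 → Fin 13 → Bool :=
  ![![false, false, false, false, false, true, false, true, false, false, false, false, true],
    ![false, false, false, false, false, false, true, true, true, false, true, false, false],
    ![false, false, false, true, false, false, false, true, false, false, false, true, false],
    ![false, false, true, false, false, true, false, false, true, true, false, false, false],
    ![false, false, false, false, false, false, false, false, false, true, true, true, true],
    ![true, false, false, true, false, false, true, false, false, true, false, false, false],
    ![false, true, false, false, false, true, false, false, false, false, false, true, false],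
    ![true, true, true, false, false, false, false, false, false, false, true, false, false],
    ![false, true, false, true, false, false, false, false, false, false, false, false, true],
    ![false, false, false, true, true, true, false, false, false, false, true, false, false],
    ![false, true, false, false, true, false, false, true, false, true, false, false, false],
    ![false, false, true, false, true, false, true, false, false, false, false, false, true],
    ![true, false, false, false, true, false, false, false, true, false, false, true, false]]

lemma mem_lineOf (v w : Fin 3 → ℝ) :
    w ∈ lineOf v ↔ w 0 * v 0 + w 1 * v 1 + w 2 * v 2 = 0 := by
  simp [lineOf, LinearMap.mem_ker, LinearMap.lsum_apply, Fin.sum_univ_three,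
    LinearMap.toSpanSingleton_apply, smul_eq_mul]

lemma vecs_cast (i : Fin 13) (k : Fin 3) : vecs i k = ((vecsZ i k : ℤ) : ℝ) := by
  fin_cases i <;> fin_cases k <;> norm_num [vecs, vecsZ]

lemma dotZ_iff (i j : Fin 13) :
    (vecsZ i 0 * vecsZ j 0 + vecsZ i 1 * vecsZ j 1 + vecsZ i 2 * vecsZ j 2 = 0)
      ↔ M i j = true := by
  revert i j; decide

lemma key (i j : Fin 13) :
    Submodule.span ℝ {vecs i} ≤ lineOf (vecs j) ↔ M i j = true := by
  rw [Submodule.span_le, Set.singleton_subset_iff, SetLike.mem_coe, mem_lineOf]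
  rw [← dotZ_iff i j]
  simp only [vecs_cast]
  norm_cast

lemma Mrow : ∀ i j : Fin 13, (∀ k, M i k = true ↔ M j k = true) → i = j := by decide

lemma Mcol : ∀ i j : Fin 13, (∀ k, M k i = true ↔ M k j = true) → i = j := by decide

lemma pinj : Function.Injective (fun i : Fin 13 => Submodule.span ℝ {vecs i}) := by
  intro i j h
  exact Mrow i j fun k => by rw [← key i k, ← key j k]; simp only at h; rw [h]

lemma linj : Function.Injective (fun i : Fin 13 => lineOf (vecs i)) := by
  intro i j h
  exact Mcol i j fun k => by rw [← key k i, ← key k j]; simp only at h; rw [h]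

lemma rowdeg : ∀ i : Fin 13,
    ((Finset.univ : Finset (Fin 13)).filter (fun j => M i j = true)).card = 3 ∨
    ((Finset.univ : Finset (Fin 13)).filter (fun j => M i j = true)).card = 4 := by decide

lemma coldeg : ∀ j : Fin 13,
    ((Finset.univ : Finset (Fin 13)).filter (fun i => M i j = true)).card = 3 ∨
    ((Finset.univ : Finset (Fin 13)).filter (fun i => M i j = true)).card = 4 := by decide

lemma totalcount :
    ((Finset.univ : Finset (Fin 13 × Fin 13)).filter (fun ij => M ij.1 ij.2 = true)).card
      = 48 := by decide

lemma prodeq :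
    (Finset.univ.image (fun i : Fin 13 => Submodule.span ℝ {vecs i})) ×ˢ
      (Finset.univ.image (fun i : Fin 13 => lineOf (vecs i))) =
    Finset.univ.image (fun ij : Fin 13 × Fin 13 =>
      (Submodule.span ℝ {vecs ij.1}, lineOf (vecs ij.2))) := by
  ext ⟨p, l⟩
  simp only [Finset.mem_product, Finset.mem_image, Finset.mem_univ, true_and, Prod.mk.injEq,
    Prod.ext_iff]
  constructor
  · rintro ⟨⟨i, rfl⟩, ⟨j, rfl⟩⟩; exact ⟨(i, j), rfl, rfl⟩
  · rintro ⟨⟨i, j⟩, h1, h2⟩; exact ⟨⟨i, h1⟩, ⟨j, h2⟩⟩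

theorem stmt12 :
    (Finset.univ.image (fun i => Submodule.span ℝ {vecs i})).card = 13 ∧
    (Finset.univ.image (fun i => lineOf (vecs i))).card = 13 ∧
    (∀ p ∈ Finset.univ.image (fun i => Submodule.span ℝ {vecs i}),
      pointDeg (Finset.univ.image (fun i => lineOf (vecs i))) p = 3 ∨
      pointDeg (Finset.univ.image (fun i => lineOf (vecs i))) p = 4) ∧
    (∀ l ∈ Finset.univ.image (fun i => lineOf (vecs i)),
      lineDeg (Finset.univ.image (fun i => Submodule.span ℝ {vecs i})) l = 3 ∨
      lineDeg (Finset.univ.image (fun i => Submodule.span ℝ {vecs i})) l = 4) ∧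
    incCount (Finset.univ.image (fun i => Submodule.span ℝ {vecs i}))
      (Finset.univ.image (fun i => lineOf (vecs i))) = 48 := by
  refine ⟨?_, ?_, ?_, ?_, ?_⟩
  · rw [Finset.card_image_of_injective _ pinj]; simp
  · rw [Finset.card_image_of_injective _ linj]; simp
  · intro p hp
    obtain ⟨i, -, rfl⟩ := Finset.mem_image.mp hp
    unfold pointDeg
    rw [Finset.filter_image, Finset.card_image_of_injective _ linj,
      Finset.filter_congr (fun j _ => key i j)]
    exact rowdeg i
  · intro l hl
    obtain ⟨j, -, rfl⟩ := Finset.mem_image.mp hl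
    unfold lineDeg
    rw [Finset.filter_image, Finset.card_image_of_injective _ pinj,
      Finset.filter_congr (fun i _ => key i j)]
    exact coldeg j
  · unfold incCount
    have hinj : Function.Injective (fun ij : Fin 13 × Fin 13 =>
        (Submodule.span ℝ {vecs ij.1}, lineOf (vecs ij.2))) := by
      intro a b h
      rw [Prod.mk.injEq] at h
      exact Prod.ext (pinj h.1) (linj h.2)
    rw [prodeq, Finset.filter_image, Finset.card_image_of_injective _ hinj,
      Finset.filter_congr (fun ij _ => key ij.1 ij.2)]
    exact totalcount
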